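/- arXiv:1106.0833 — 2 statements merged into one kernel-verified Lean document; each statement's English description precedes it below -/
import Mathlib

section
/- Let (x, a) be a strategy and suppose there exists a door x' ≠ x with a x' = match. Then the always-switching strategy based at x' weakly dominates (x, a): for every winning door θ ∈ D and every host function d admissible for θ, the payoff of (x', switch) at θ is at least the payoff of (x, a) at θ under d. Concretely, for θ ≠ x' the payoff of (x', switch) equals 1, while for θ = x' both strategies receive payoff 0 (since admissibility forces d x = x', so (x, a) plays match at a losing door). -/
/-- Doors form a finite type `D`. A host function `d` is admissible for the
winning door `θ` if `d x = θ` whenever `x ≠ θ`, and `d θ ≠ θ`. -/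
def Admissible {D : Type*} [DecidableEq D] (θ : D) (d : D → D) : Prop :=
  (∀ x, x ≠ θ → d x = θ) ∧ d θ ≠ θ

/-- Payoff of an action (`true` = switch, `false` = match) at chosen door `x`
when the winning door is `θ`. -/
def payoff {D : Type*} [DecidableEq D] (θ x : D) (act : Bool) : ℝ :=
  if act then (if x ≠ θ then 1 else 0) else (if x = θ then 1 else 0)

/-- Payoff of the strategy `(x, a)` against winning door `θ` and host function `d`. -/
def stratPayoff {D : Type*} [DecidableEq D] (θ x : D) (a : D → Bool) (d : D → D) : ℝ :=
  payoff θ x (a (d x))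

section Payoff

variable {D : Type*} [DecidableEq D]

lemma payoff_le_one (θ x : D) (act : Bool) : payoff θ x act ≤ 1 := by
  unfold payoff
  split_ifs <;> norm_num

lemma stratPayoff_le_one (θ x : D) (a : D → Bool) (d : D → D) : stratPayoff θ x a d ≤ 1 :=
  payoff_le_one θ x (a (d x))

lemma stratPayoff_switch_of_ne {θ x : D} (d : D → D) (hx : x ≠ θ) :
    stratPayoff θ x (fun _ => true) d = 1 := by
  simp [stratPayoff, payoff, hx]

lemma stratPayoff_switch_self (θ : D) (d : D → D) : stratPayoff θ θ (fun _ => true) d = 0 := by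
  simp [stratPayoff, payoff]

lemma Admissible.apply_of_ne {θ : D} {d : D → D} (hd : Admissible θ d) {x : D} (hx : x ≠ θ) :
    d x = θ :=
  hd.1 x hx

/-- Away from the winning door the host always opens `θ`, so a strategy that matches at `θ`
stays on its losing door. -/
lemma stratPayoff_eq_zero_of_match_at_winning_door {θ x : D} {a : D → Bool} {d : D → D}
    (hd : Admissible θ d) (hx : x ≠ θ) (ha : a θ = false) : stratPayoff θ x a d = 0 := by
  simp [stratPayoff, payoff, hd.apply_of_ne hx, ha, hx]

end Payoff

theorem dominance_of_switch_based_at_match_door_general {D : Type*} [DecidableEq D]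
    (x : D) (a : D → Bool)
    (x' : D) (hx' : x' ≠ x) (ha : a x' = false) :
    (∀ θ : D, ∀ d : D → D, Admissible θ d →
        stratPayoff θ x a d ≤ stratPayoff θ x' (fun _ => true) d) ∧
    (∀ θ : D, θ ≠ x' → ∀ d : D → D, Admissible θ d →
        stratPayoff θ x' (fun _ => true) d = 1) ∧
    (∀ d : D → D, Admissible x' d →
        stratPayoff x' x' (fun _ => true) d = 0 ∧ stratPayoff x' x a d = 0) := by
  have switch_wins : ∀ θ : D, θ ≠ x' → ∀ d : D → D, Admissible θ d →
      stratPayoff θ x' (fun _ => true) d = 1 :=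
    fun θ hθ d _ => stratPayoff_switch_of_ne d hθ.symm
  have both_lose : ∀ d : D → D, Admissible x' d →
      stratPayoff x' x' (fun _ => true) d = 0 ∧ stratPayoff x' x a d = 0 :=
    fun d hd => ⟨stratPayoff_switch_self x' d,
      stratPayoff_eq_zero_of_match_at_winning_door hd hx'.symm ha⟩
  refine ⟨fun θ d hd => ?_, switch_wins, both_lose⟩
  by_cases hθ : θ = x'
  · subst hθ
    rw [(both_lose d hd).1, (both_lose d hd).2]
  · rw [switch_wins θ hθ d hd]
    exact stratPayoff_le_one θ x a d

/-- If `(x, a)` plays `match` at some door `x' ≠ x`, then the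
always-switching strategy based at `x'` weakly dominates `(x, a)`; moreover
for `θ ≠ x'` the switching strategy's payoff is `1`, while for `θ = x'` both
strategies get payoff `0`. -/
theorem dominance_of_switch_based_at_match_door {D : Type*} [Fintype D] [DecidableEq D]
    (hD : 3 ≤ Fintype.card D) (x : D) (a : D → Bool)
    (x' : D) (hx' : x' ≠ x) (ha : a x' = false) :
    (∀ θ : D, ∀ d : D → D, Admissible θ d →
        stratPayoff θ x a d ≤ stratPayoff θ x' (fun _ => true) d) ∧
    (∀ θ : D, θ ≠ x' → ∀ d : D → D, Admissible θ d →
        stratPayoff θ x' (fun _ => true) d = 1) ∧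
    (∀ d : D → D, Admissible x' d →
        stratPayoff x' x' (fun _ => true) d = 0 ∧ stratPayoff x' x a d = 0) :=
  dominance_of_switch_based_at_match_door_general x a x' hx' ha
end

section
/- Let n be the cardinality of D. If the player uses the mixed strategy that chooses the initial door X uniformly at random on D and then always switches, then against every prior p and every transition probabilities q the winning probability equals (n - 1)/n; that is, (1/n) * ∑_{x ∈ D} ExpWin(x, switch, p, q) = (n - 1)/n. -/
open Finset

/-- `p` is a prior on the doors. -/
def IsPrior {D : Type*} [Fintype D] (p : D → ℝ) : Prop :=
  (∀ θ, 0 ≤ p θ) ∧ ∑ θ, p θ = 1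

/-- `q` are transition probabilities for the revealed door. -/
def IsTransKernel {D : Type*} [Fintype D] (q : D → D → ℝ) : Prop :=
  (∀ θ y, 0 ≤ q θ y) ∧ (∀ θ, q θ θ = 0) ∧ (∀ θ, ∑ y, q θ y = 1)

/-- Expected winning probability of strategy `(x, a)` (`true` = switch,
`false` = match) under prior `p` and transition probabilities `q`. -/
def ExpWin {D : Type*} [Fintype D] [DecidableEq D]
    (x : D) (a : D → Bool) (p : D → ℝ) (q : D → D → ℝ) : ℝ :=
  p x * ∑ y ∈ Finset.univ.filter (· ≠ x), q x y * (if a y = false then 1 else 0)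
    + ∑ θ ∈ Finset.univ.filter (· ≠ x), p θ * (if a θ = true then 1 else 0)

section AlwaysSwitch

variable {D : Type*} [Fintype D] [DecidableEq D]

theorem expWin_switch (x : D) (p : D → ℝ) (q : D → D → ℝ) :
    ExpWin x (fun _ => true) p q = ∑ θ, p θ - p x := by
  simp [ExpWin, filter_ne', sum_erase_eq_sub (mem_univ x)]

theorem sum_expWin_switch (p : D → ℝ) (q : D → D → ℝ) :
    ∑ x, ExpWin x (fun _ => true) p q = ((Fintype.card D : ℝ) - 1) * ∑ θ, p θ := by
  simp only [expWin_switch, sum_sub_distrib, sum_const, card_univ, nsmul_eq_mul]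
  ring

end AlwaysSwitch

theorem mixed_switching_value_general {D : Type*} [Fintype D] [DecidableEq D]
    (p : D → ℝ) (hp : IsPrior p)
    (q : D → D → ℝ) :
    (1 / (Fintype.card D : ℝ)) * ∑ x : D, ExpWin x (fun _ => true) p q =
      ((Fintype.card D : ℝ) - 1) / (Fintype.card D : ℝ) := by
  rw [sum_expWin_switch, hp.2]
  ring

/-- The mixed strategy choosing the initial door uniformly and
always switching wins with probability `(n-1)/n` against every `(p, q)`. -/
theorem mixed_switching_value {D : Type*} [Fintype D] [DecidableEq D]
    (hD : 3 ≤ Fintype.card D) (p : D → ℝ) (hp : IsPrior p)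
    (q : D → D → ℝ) (hq : IsTransKernel q) :
    (1 / (Fintype.card D : ℝ)) * ∑ x : D, ExpWin x (fun _ => true) p q =
      ((Fintype.card D : ℝ) - 1) / (Fintype.card D : ℝ) :=
  mixed_switching_value_general p hp q
end
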